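/- arXiv:2103.10820 — 4 statements merged into one kernel-verified Lean document; each statement's English description precedes it below -/
import Mathlib

section
/- Let N, m be positive integers, Φ ∈ ℝ^{N×m}, ρ* ∈ ℝ^m, σ > 0, and let w be a random vector in ℝ^N with E[w] = 0 and E[w wᵀ] = σ²·I_N. Set y = Φρ* + w. For a positive semidefinite matrix P ∈ ℝ^{m×m} and scalar γ > 0 such that P ΦᵀΦ + γ I_m is invertible, define the regularized least-squares estimate ρ̂(P, γ) = (P ΦᵀΦ + γ I_m)^{-1} P Φᵀ y and its MSE matrix M(P, γ) = E[(ρ̂(P,γ) − ρ*)(ρ̂(P,γ) − ρ*)ᵀ]. Then the matrix ρ*ρ*ᵀ ΦᵀΦ + σ² I_m is invertible, and for every admissible pair (P, γ), the matrix M(P, γ) − M(ρ*ρ*ᵀ, σ²) is positive semidefinite. -/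
/-!
Write the estimator as `ρ̂ = L y` with gain `L = (P_r ΦᵀΦ + γ I)⁻¹ P_r Φᵀ`. Then
`ρ̂ - ρ* = (L Φ - I) ρ* + L w`, so with `R = ρ*ρ*ᵀ` the MSE matrix is
`(L Φ - I) R (L Φ - I)ᵀ + σ² L Lᵀ`, a quadratic function of `L` alone. Completing the square
with `S = Φ R Φᵀ + σ² I` gives `(L - K) S (L - K)ᵀ + R - K S Kᵀ` for any `K` with
`K S = R Φᵀ`, and the gain `K = (R ΦᵀΦ + σ² I)⁻¹ R Φᵀ` of the choice `P_r = R`, `γ = σ²` is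
such a `K`, because `R ΦᵀΦ + σ² I` intertwines `R Φᵀ` with `S`.
-/

open MeasureTheory Matrix

theorem Matrix.PosSemidef.mul_mul_transpose_same {m n : Type*} [Fintype n] [Finite m]
    {A : Matrix n n ℝ} (hA : A.PosSemidef) (B : Matrix m n ℝ) : (B * A * Bᵀ).PosSemidef := by
  simpa only [conjTranspose_eq_transpose_of_trivial] using hA.mul_mul_conjTranspose_same B

theorem dotProduct_mul_dotProduct {n : Type*} [Fintype n] (f g v : n → ℝ) :
    (f ⬝ᵥ v) * (g ⬝ᵥ v) = ∑ i, ∑ j, f i * g j * (v i * v j) := by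
  simp only [dotProduct, Fintype.sum_mul_sum]
  exact Finset.sum_congr rfl fun i _ => Finset.sum_congr rfl fun j _ => by ring

section WhiteNoise

variable {Ω n : Type*} [MeasurableSpace Ω] [Fintype n] [DecidableEq n]

structure IsWhiteNoise (P : Measure Ω) (w : Ω → n → ℝ) (σ : ℝ) : Prop where
  integrable : ∀ i, Integrable (fun ω => w ω i) P
  integral_eq_zero : ∀ i, ∫ ω, w ω i ∂P = 0
  integrable_mul : ∀ i j, Integrable (fun ω => w ω i * w ω j) P
  integral_mul : ∀ i j, ∫ ω, w ω i * w ω j ∂P = if i = j then σ ^ 2 else 0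

namespace IsWhiteNoise

variable {P : Measure Ω} {w : Ω → n → ℝ} {σ : ℝ}

theorem integrable_dotProduct (hw : IsWhiteNoise P w σ) (f : n → ℝ) :
    Integrable (fun ω => f ⬝ᵥ w ω) P :=
  integrable_finsetSum _ fun i _ => (hw.integrable i).const_mul (f i)

theorem integral_dotProduct (hw : IsWhiteNoise P w σ) (f : n → ℝ) :
    ∫ ω, f ⬝ᵥ w ω ∂P = 0 := by
  simp only [dotProduct]
  rw [integral_finsetSum _ fun i _ => (hw.integrable i).const_mul (f i)]
  simp [integral_const_mul, hw.integral_eq_zero]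

theorem integrable_dotProduct_mul_dotProduct (hw : IsWhiteNoise P w σ) (f g : n → ℝ) :
    Integrable (fun ω => (f ⬝ᵥ w ω) * (g ⬝ᵥ w ω)) P := by
  simp only [dotProduct_mul_dotProduct]
  exact integrable_finsetSum _ fun i _ =>
    integrable_finsetSum _ fun j _ => (hw.integrable_mul i j).const_mul _

theorem integral_dotProduct_mul_dotProduct (hw : IsWhiteNoise P w σ) (f g : n → ℝ) :
    ∫ ω, (f ⬝ᵥ w ω) * (g ⬝ᵥ w ω) ∂P = σ ^ 2 * (f ⬝ᵥ g) := by
  simp only [dotProduct_mul_dotProduct]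
  rw [integral_finsetSum _ fun i _ => integrable_finsetSum _ fun j _ =>
    (hw.integrable_mul i j).const_mul _]
  simp_rw [integral_finsetSum _ fun j _ => (hw.integrable_mul _ j).const_mul _,
    integral_const_mul, hw.integral_mul, mul_ite, mul_zero, Finset.sum_ite_eq,
    Finset.mem_univ, if_true, dotProduct, Finset.mul_sum]
  exact Finset.sum_congr rfl fun i _ => by ring

theorem integral_affine_mul_affine [IsProbabilityMeasure P] (hw : IsWhiteNoise P w σ)
    (a b : ℝ) (f g : n → ℝ) :
    ∫ ω, (a + f ⬝ᵥ w ω) * (b + g ⬝ᵥ w ω) ∂P = a * b + σ ^ 2 * (f ⬝ᵥ g) := by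
  have hf := hw.integrable_dotProduct f
  have hg := hw.integrable_dotProduct g
  have expand : ∀ ω, (a + f ⬝ᵥ w ω) * (b + g ⬝ᵥ w ω)
      = a * b + a * (g ⬝ᵥ w ω) + b * (f ⬝ᵥ w ω) + (f ⬝ᵥ w ω) * (g ⬝ᵥ w ω) := fun ω => by ring
  simp only [expand]
  rw [integral_add _ (hw.integrable_dotProduct_mul_dotProduct f g),
    integral_add _ (hf.const_mul b), integral_add (integrable_const _) (hg.const_mul a),
    integral_const_mul a (fun ω => g ⬝ᵥ w ω), integral_const_mul b (fun ω => f ⬝ᵥ w ω),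
    hw.integral_dotProduct, hw.integral_dotProduct, hw.integral_dotProduct_mul_dotProduct]
  · simp
  · exact (integrable_const _).add (hg.const_mul a)
  · exact ((integrable_const _).add (hg.const_mul a)).add (hf.const_mul b)

theorem secondMoment_add_mulVec {p : Type*} [IsProbabilityMeasure P] (hw : IsWhiteNoise P w σ)
    (b : p → ℝ) (L : Matrix p n ℝ) :
    (Matrix.of fun i j => ∫ ω, (b + L *ᵥ w ω) i * (b + L *ᵥ w ω) j ∂P)
      = vecMulVec b b + σ ^ 2 • (L * Lᵀ) := by
  ext i j
  simp only [of_apply, Pi.add_apply, mulVec, hw.integral_affine_mul_affine]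
  simp [vecMulVec_apply, mul_apply, dotProduct]

end IsWhiteNoise

end WhiteNoise

section Gain

variable {n p : Type*} [Fintype n] [Fintype p] [DecidableEq n] [DecidableEq p]

def gainMSE (Φ : Matrix n p ℝ) (R : Matrix p p ℝ) (σ : ℝ) (L : Matrix p n ℝ) : Matrix p p ℝ :=
  (L * Φ - 1) * R * (L * Φ - 1)ᵀ + σ ^ 2 • (L * Lᵀ)

theorem IsWhiteNoise.secondMoment_linearEstimator_sub {Ω : Type*} [MeasurableSpace Ω]
    {P : Measure Ω} [IsProbabilityMeasure P] {w : Ω → n → ℝ} {σ : ℝ} (hw : IsWhiteNoise P w σ)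
    (Φ : Matrix n p ℝ) (ρ : p → ℝ) (L : Matrix p n ℝ) :
    (Matrix.of fun i j =>
        ∫ ω, (L *ᵥ (Φ *ᵥ ρ + w ω) - ρ) i * (L *ᵥ (Φ *ᵥ ρ + w ω) - ρ) j ∂P)
      = gainMSE Φ (vecMulVec ρ ρ) σ L := by
  have error : ∀ ω, L *ᵥ (Φ *ᵥ ρ + w ω) - ρ = (L * Φ - 1) *ᵥ ρ + L *ᵥ w ω := fun ω => by
    rw [mulVec_add, mulVec_mulVec, sub_mulVec, one_mulVec]
    abel
  simp only [error, hw.secondMoment_add_mulVec, gainMSE, mul_vecMulVec, vecMulVec_mul,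
    vecMul_transpose]

theorem gainMSE_eq (Φ : Matrix n p ℝ) (R : Matrix p p ℝ) (σ : ℝ) (L : Matrix p n ℝ) :
    gainMSE Φ R σ L = L * (Φ * R * Φᵀ + σ ^ 2 • 1) * Lᵀ - L * Φ * R - R * Φᵀ * Lᵀ + R := by
  simp only [gainMSE, transpose_sub, transpose_mul, transpose_one, Matrix.add_mul,
    Matrix.mul_add, Matrix.mul_smul, Matrix.smul_mul, Matrix.mul_one, Matrix.sub_mul,
    Matrix.mul_sub, Matrix.one_mul, Matrix.mul_assoc]
  abel

theorem gainMSE_sub_gainMSE (Φ : Matrix n p ℝ) {R : Matrix p p ℝ} (hR : R.IsSymm) (σ : ℝ)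
    {K : Matrix p n ℝ} (hK : K * (Φ * R * Φᵀ + σ ^ 2 • 1) = R * Φᵀ) (L : Matrix p n ℝ) :
    gainMSE Φ R σ L - gainMSE Φ R σ K = (L - K) * (Φ * R * Φᵀ + σ ^ 2 • 1) * (L - K)ᵀ := by
  rw [gainMSE_eq, gainMSE_eq]
  set S := Φ * R * Φᵀ + σ ^ 2 • 1
  have hS : Sᵀ = S := by simp [S, transpose_add, transpose_mul, hR.eq, Matrix.mul_assoc]
  have hK' : S * Kᵀ = Φ * R := by
    simpa [transpose_mul, hS, hR.eq] using congrArg transpose hK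
  have hKΦR : K * Φ * R = R * Φᵀ * Kᵀ := by
    rw [Matrix.mul_assoc, ← hK', ← Matrix.mul_assoc, hK]
  simp only [transpose_sub, Matrix.sub_mul, Matrix.mul_sub]
  rw [Matrix.mul_assoc L S Kᵀ, Matrix.mul_assoc K S Kᵀ, hK, hK', ← Matrix.mul_assoc,
    ← Matrix.mul_assoc, hKΦR]
  abel

omit [DecidableEq n] in
theorem isUnit_mul_transpose_mul_add_smul_one {R : Matrix p p ℝ} (hR : R.PosSemidef)
    (Φ : Matrix n p ℝ) {c : ℝ} (hc : 0 < c) : IsUnit (R * Φᵀ * Φ + c • 1) := by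
  refine isUnit_iff_ne_zero.mpr ?_ |> (isUnit_iff_isUnit_det _).mpr
  rw [Ne, ← exists_mulVec_eq_zero_iff]
  rintro ⟨x, hx0, hx⟩
  set u := Φᵀ *ᵥ (Φ *ᵥ x)
  have hRu : R *ᵥ u = -(c • x) := by
    rw [add_mulVec, smul_mulVec, one_mulVec, ← mulVec_mulVec, ← mulVec_mulVec] at hx
    exact eq_neg_of_add_eq_zero_left hx
  -- `0 ≤ uᵀ R u = -c ‖Φ x‖²`
  have hΦx : Φ *ᵥ x = 0 := by
    have h := hR.dotProduct_mulVec_nonneg u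
    rw [star_trivial, hRu, dotProduct_neg, dotProduct_smul, smul_eq_mul, dotProduct_comm,
      dotProduct_mulVec, ← mulVec_transpose, transpose_transpose] at h
    refine dotProduct_self_eq_zero.mp <|
      le_antisymm ?_ (Fintype.sum_nonneg fun _ => mul_self_nonneg _)
    exact le_of_mul_le_mul_left (by linarith) hc
  have : c • x = 0 := by
    rw [← neg_eq_zero, ← hRu, show u = 0 by simp only [u, hΦx, mulVec_zero], mulVec_zero]
  exact hx0 ((smul_eq_zero.mp this).resolve_left hc.ne')

theorem inv_mul_transpose_mul_add_smul_one_mul {R : Matrix p p ℝ} {Φ : Matrix n p ℝ} {c : ℝ}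
    (hA : IsUnit (R * Φᵀ * Φ + c • 1)) :
    (R * Φᵀ * Φ + c • 1)⁻¹ * (R * Φᵀ) * (Φ * R * Φᵀ + c • 1) = R * Φᵀ := by
  have intertwine : (R * Φᵀ * Φ + c • 1) * (R * Φᵀ) = R * Φᵀ * (Φ * R * Φᵀ + c • 1) := by
    simp only [Matrix.add_mul, Matrix.mul_add, Matrix.smul_mul, Matrix.mul_smul, Matrix.one_mul,
      Matrix.mul_one, Matrix.mul_assoc]
  rw [Matrix.mul_assoc, ← intertwine, ← Matrix.mul_assoc,
    nonsing_inv_mul _ ((isUnit_iff_isUnit_det _).mp hA), Matrix.one_mul]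

end Gain

theorem optimal_regularization_general
    {Ω : Type*} [MeasurableSpace Ω] (P : Measure Ω) [IsProbabilityMeasure P]
    (N m : ℕ)
    (Φ : Matrix (Fin N) (Fin m) ℝ) (ρs : Fin m → ℝ) (σ : ℝ) (hσ : 0 < σ)
    (w : Ω → Fin N → ℝ)
    (hw_int : ∀ i, Integrable (fun ω => w ω i) P)
    (hw_mean : ∀ i, ∫ ω, w ω i ∂P = 0)
    (hw_cov_int : ∀ i j, Integrable (fun ω => w ω i * w ω j) P)
    (hw_cov : ∀ i j, ∫ ω, w ω i * w ω j ∂P = if i = j then σ ^ 2 else 0)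
    (y : Ω → Fin N → ℝ) (hy : ∀ ω, y ω = Φ *ᵥ ρs + w ω)
    (ρhat : Matrix (Fin m) (Fin m) ℝ → ℝ → Ω → Fin m → ℝ)
    (hρhat : ∀ Pr γ ω, ρhat Pr γ ω = (Pr * Φᵀ * Φ + γ • 1)⁻¹ *ᵥ (Pr *ᵥ (Φᵀ *ᵥ y ω)))
    (M : Matrix (Fin m) (Fin m) ℝ → ℝ → Matrix (Fin m) (Fin m) ℝ)
    (hM : ∀ Pr γ, M Pr γ
      = Matrix.of fun i j => ∫ ω, (ρhat Pr γ ω i - ρs i) * (ρhat Pr γ ω j - ρs j) ∂P) :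
    IsUnit (vecMulVec ρs ρs * Φᵀ * Φ + σ ^ 2 • (1 : Matrix (Fin m) (Fin m) ℝ)) ∧
    ∀ (Pr : Matrix (Fin m) (Fin m) ℝ) (γ : ℝ), Pr.PosSemidef → 0 < γ →
      IsUnit (Pr * Φᵀ * Φ + γ • (1 : Matrix (Fin m) (Fin m) ℝ)) →
      (M Pr γ - M (vecMulVec ρs ρs) (σ ^ 2)).PosSemidef := by
  set R := vecMulVec ρs ρs
  have hR : R.PosSemidef := by simpa using posSemidef_vecMulVec_self_star ρs
  have hw : IsWhiteNoise P w σ := ⟨hw_int, hw_mean, hw_cov_int, hw_cov⟩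
  have hM_gain : ∀ Q γ, M Q γ = gainMSE Φ R σ ((Q * Φᵀ * Φ + γ • 1)⁻¹ * (Q * Φᵀ)) := by
    intro Q γ
    rw [hM, ← hw.secondMoment_linearEstimator_sub]
    simp only [hρhat, hy, mulVec_mulVec, Pi.sub_apply]
  have hA := isUnit_mul_transpose_mul_add_smul_one hR Φ (pow_pos hσ 2)
  refine ⟨hA, fun Pr γ _ _ _ => ?_⟩
  rw [hM_gain, hM_gain,
    gainMSE_sub_gainMSE Φ (transpose_vecMulVec ρs ρs) σ (inv_mul_transpose_mul_add_smul_one_mul hA)]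
  exact ((hR.mul_mul_transpose_same Φ).add (.smul .one (sq_nonneg σ))).mul_mul_transpose_same _

/-- Optimality of the regularization `P_r = ρ*ρ*ᵀ`, `γ = σ²`: the MSE matrix of any
admissible regularized least-squares estimator dominates that of the optimal one in the
positive semidefinite ordering. -/
theorem optimal_regularization
    {Ω : Type*} [MeasurableSpace Ω] (P : Measure Ω) [IsProbabilityMeasure P]
    (N m : ℕ) (hN : 0 < N) (hm : 0 < m)
    (Φ : Matrix (Fin N) (Fin m) ℝ) (ρs : Fin m → ℝ) (σ : ℝ) (hσ : 0 < σ)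
    (w : Ω → Fin N → ℝ) (hw_meas : Measurable w)
    (hw_int : ∀ i, Integrable (fun ω => w ω i) P)
    (hw_mean : ∀ i, ∫ ω, w ω i ∂P = 0)
    (hw_cov_int : ∀ i j, Integrable (fun ω => w ω i * w ω j) P)
    (hw_cov : ∀ i j, ∫ ω, w ω i * w ω j ∂P = if i = j then σ ^ 2 else 0)
    (y : Ω → Fin N → ℝ) (hy : ∀ ω, y ω = Φ *ᵥ ρs + w ω)
    (ρhat : Matrix (Fin m) (Fin m) ℝ → ℝ → Ω → Fin m → ℝ)
    (hρhat : ∀ Pr γ ω, ρhat Pr γ ω = (Pr * Φᵀ * Φ + γ • 1)⁻¹ *ᵥ (Pr *ᵥ (Φᵀ *ᵥ y ω)))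
    (M : Matrix (Fin m) (Fin m) ℝ → ℝ → Matrix (Fin m) (Fin m) ℝ)
    (hM : ∀ Pr γ, M Pr γ
      = Matrix.of fun i j => ∫ ω, (ρhat Pr γ ω i - ρs i) * (ρhat Pr γ ω j - ρs j) ∂P) :
    IsUnit (vecMulVec ρs ρs * Φᵀ * Φ + σ ^ 2 • (1 : Matrix (Fin m) (Fin m) ℝ)) ∧
    ∀ (Pr : Matrix (Fin m) (Fin m) ℝ) (γ : ℝ), Pr.PosSemidef → 0 < γ →
      IsUnit (Pr * Φᵀ * Φ + γ • (1 : Matrix (Fin m) (Fin m) ℝ)) →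
      (M Pr γ - M (vecMulVec ρs ρs) (σ ^ 2)).PosSemidef :=
  optimal_regularization_general P N m Φ ρs σ hσ w hw_int hw_mean hw_cov_int hw_cov y hy ρhat hρhat
    M hM
end

section
/- Let N, m be positive integers, Φ ∈ ℝ^{N×m}, L ∈ ℝ^{m×m}, y ∈ ℝ^N, σ > 0, and set Z = σ²·(Φ L Lᵀ Φᵀ + I_N). Suppose R₁ ∈ ℝ^{m×m} is invertible, R₂ ∈ ℝ^m and r ∈ ℝ satisfy R₁ᵀR₁ = Lᵀ Φᵀ Φ L + I_m, R₁ᵀR₂ = Lᵀ Φᵀ y, and R₂ᵀR₂ + r² = yᵀy. Then Z is invertible and yᵀ Z^{-1} y = r²/σ². -/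
open Matrix

/-- Quadratic-form part of the log-likelihood identity: with the thin-QR identities,
`yᵀ Z⁻¹ y = r²/σ²` for `Z = σ²(Φ L Lᵀ Φᵀ + I)`. -/
theorem quadratic_form_identity
    (N m : ℕ) (hN : 0 < N) (hm : 0 < m)
    (Φ : Matrix (Fin N) (Fin m) ℝ) (L : Matrix (Fin m) (Fin m) ℝ)
    (y : Fin N → ℝ) (σ r : ℝ) (hσ : 0 < σ)
    (R₁ : Matrix (Fin m) (Fin m) ℝ) (R₂ : Fin m → ℝ)
    (hR₁ : IsUnit R₁)
    (h1 : R₁ᵀ * R₁ = Lᵀ * Φᵀ * Φ * L + 1)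
    (h2 : R₁ᵀ *ᵥ R₂ = Lᵀ *ᵥ (Φᵀ *ᵥ y))
    (h3 : R₂ ⬝ᵥ R₂ + r ^ 2 = y ⬝ᵥ y) :
    IsUnit (σ ^ 2 • (Φ * L * Lᵀ * Φᵀ + 1)) ∧
    y ⬝ᵥ ((σ ^ 2 • (Φ * L * Lᵀ * Φᵀ + 1))⁻¹ *ᵥ y) = r ^ 2 / σ ^ 2 := by
  set A : Matrix (Fin N) (Fin m) ℝ := Φ * L with hA
  set M : Matrix (Fin m) (Fin m) ℝ := R₁ᵀ * R₁ with hMdef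
  have hAt : Aᵀ = Lᵀ * Φᵀ := by simp [hA, Matrix.transpose_mul]
  have hAtA : Aᵀ * A = M - 1 := by
    rw [hAt, h1, hA]
    simp [Matrix.mul_assoc]
  -- M is a unit
  have hR₁det : IsUnit R₁.det := (Matrix.isUnit_iff_isUnit_det _).mp hR₁
  have hMdet : IsUnit M.det := by
    rw [hMdef, Matrix.det_mul, Matrix.det_transpose]
    exact hR₁det.mul hR₁det
  have hMM : M * M⁻¹ = 1 := Matrix.mul_nonsing_inv _ hMdet
  have hMM' : M⁻¹ * M = 1 := Matrix.nonsing_inv_mul _ hMdet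
  have hRR : R₁ * R₁⁻¹ = 1 := Matrix.mul_nonsing_inv _ hR₁det
  -- Woodbury inverse
  set B : Matrix (Fin N) (Fin N) ℝ := 1 - A * M⁻¹ * Aᵀ with hB
  have key : (A * Aᵀ + 1) * B = 1 := by
    have e1 : A * Aᵀ * (A * M⁻¹ * Aᵀ) = A * ((Aᵀ * A) * M⁻¹) * Aᵀ := by
      simp only [Matrix.mul_assoc]
    have e2 : A * ((M - 1) * M⁻¹) * Aᵀ = A * Aᵀ - A * M⁻¹ * Aᵀ := by
      rw [sub_mul, one_mul, hMM, Matrix.mul_sub, Matrix.mul_one, Matrix.sub_mul]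
    rw [hB, mul_sub, mul_one, add_mul, one_mul, e1, hAtA, e2]
    abel
  have key2 : B * (A * Aᵀ + 1) = 1 := by
    have e1 : A * M⁻¹ * Aᵀ * (A * Aᵀ) = A * (M⁻¹ * (Aᵀ * A)) * Aᵀ := by
      simp only [Matrix.mul_assoc]
    have e2 : A * (M⁻¹ * (M - 1)) * Aᵀ = A * Aᵀ - A * M⁻¹ * Aᵀ := by
      rw [mul_sub, mul_one, hMM', Matrix.mul_sub, Matrix.mul_one, Matrix.sub_mul]
    rw [hB, sub_mul, one_mul, mul_add, mul_one, e1, hAtA, e2]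
    abel
  have hσ2 : (σ ^ 2 : ℝ) ≠ 0 := by positivity
  set Z : Matrix (Fin N) (Fin N) ℝ := σ ^ 2 • (A * Aᵀ + 1) with hZ
  have hZB : Z * ((σ ^ 2)⁻¹ • B) = 1 := by
    rw [hZ, Matrix.smul_mul, Matrix.mul_smul, key, smul_smul,
      mul_inv_cancel₀ hσ2, one_smul]
  have hZunit : IsUnit Z := by
    have hdet : IsUnit Z.det := Matrix.isUnit_det_of_right_inverse hZB
    exact (Matrix.isUnit_iff_isUnit_det _).mpr hdet
  have hZinv : Z⁻¹ = (σ ^ 2)⁻¹ • B := Matrix.inv_eq_right_inv hZB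
  have hform : Φ * L * Lᵀ * Φᵀ + 1 = A * Aᵀ + 1 := by
    rw [hA, hAt]; simp [Matrix.mul_assoc]
  refine ⟨by rw [hform]; exact hZunit, ?_⟩
  rw [hform, ← hZ, hZinv]
  -- compute the quadratic form
  have hAty : Aᵀ *ᵥ y = R₁ᵀ *ᵥ R₂ := by
    rw [hAt, h2, Matrix.mulVec_mulVec]
  have hw : M⁻¹ *ᵥ (Aᵀ *ᵥ y) = R₁⁻¹ *ᵥ R₂ := by
    have eM : M * R₁⁻¹ = R₁ᵀ := by rw [hMdef, mul_assoc, hRR, mul_one]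
    have e : R₁ᵀ *ᵥ R₂ = M *ᵥ (R₁⁻¹ *ᵥ R₂) := by
      rw [Matrix.mulVec_mulVec, eM]
    rw [hAty, e, Matrix.mulVec_mulVec, hMM', Matrix.one_mulVec]
  have hquad : y ⬝ᵥ ((A * M⁻¹ * Aᵀ) *ᵥ y) = R₂ ⬝ᵥ R₂ := by
    have e : (A * M⁻¹ * Aᵀ) *ᵥ y = A *ᵥ (M⁻¹ *ᵥ (Aᵀ *ᵥ y)) := by
      simp only [← Matrix.mulVec_mulVec]
    rw [e, hw, Matrix.dotProduct_mulVec, ← Matrix.mulVec_transpose, hAty,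
      Matrix.mulVec_transpose, ← Matrix.dotProduct_mulVec,
      Matrix.mulVec_mulVec, hRR, Matrix.one_mulVec]
  have hByy : y ⬝ᵥ (B *ᵥ y) = r ^ 2 := by
    rw [hB, Matrix.sub_mulVec, Matrix.one_mulVec, dotProduct_sub, hquad]
    linarith
  rw [Matrix.smul_mulVec, dotProduct_smul, hByy, smul_eq_mul]
  field_simp
end

section
/- Let N, m be positive integers, Φ ∈ ℝ^{N×m}, L ∈ ℝ^{m×m}, y ∈ ℝ^N, σ > 0, and set P_r = σ²·L Lᵀ. Suppose R₁ ∈ ℝ^{m×m} is invertible and R₂ ∈ ℝ^m satisfy R₁ᵀR₁ = Lᵀ Φᵀ Φ L + I_m and R₁ᵀR₂ = Lᵀ Φᵀ y. Then the matrix P_r ΦᵀΦ + σ² I_m is invertible and (P_r ΦᵀΦ + σ² I_m)^{-1} P_r Φᵀ y = L R₁^{-1} R₂. -/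
open Matrix

/-- The regularized least-squares estimate with `P_r = σ² L Lᵀ` and `γ = σ²` can be
computed from the thin-QR factors as `ρ̂ = L R₁⁻¹ R₂`. -/
theorem regularized_ls_via_qr
    (N m : ℕ) (hN : 0 < N) (hm : 0 < m)
    (Φ : Matrix (Fin N) (Fin m) ℝ) (L : Matrix (Fin m) (Fin m) ℝ)
    (y : Fin N → ℝ) (σ : ℝ) (hσ : 0 < σ)
    (R₁ : Matrix (Fin m) (Fin m) ℝ) (R₂ : Fin m → ℝ)
    (hR₁ : IsUnit R₁)
    (h1 : R₁ᵀ * R₁ = Lᵀ * Φᵀ * Φ * L + 1)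
    (h2 : R₁ᵀ *ᵥ R₂ = Lᵀ *ᵥ (Φᵀ *ᵥ y)) :
    IsUnit ((σ ^ 2 • (L * Lᵀ)) * Φᵀ * Φ + σ ^ 2 • (1 : Matrix (Fin m) (Fin m) ℝ)) ∧
    ((σ ^ 2 • (L * Lᵀ)) * Φᵀ * Φ + σ ^ 2 • (1 : Matrix (Fin m) (Fin m) ℝ))⁻¹ *ᵥ
        ((σ ^ 2 • (L * Lᵀ)) *ᵥ (Φᵀ *ᵥ y))
      = L *ᵥ (R₁⁻¹ *ᵥ R₂) := by
  have hσ2 : (σ ^ 2 : ℝ) ≠ 0 := pow_ne_zero _ (ne_of_gt hσ)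
  set M : Matrix (Fin m) (Fin m) ℝ := L * Lᵀ * Φᵀ * Φ + 1 with hM
  have hA : (σ ^ 2 • (L * Lᵀ)) * Φᵀ * Φ + σ ^ 2 • (1 : Matrix (Fin m) (Fin m) ℝ)
      = σ ^ 2 • M := by
    rw [hM, smul_add, Matrix.smul_mul, Matrix.smul_mul]
  have hdetR₁ : IsUnit R₁.det := (Matrix.isUnit_iff_isUnit_det _).mp hR₁
  have hMdet : IsUnit M.det := by
    have : M.det = (R₁ᵀ * R₁).det := by
      rw [hM, h1]
      calc (L * Lᵀ * Φᵀ * Φ + 1).det = (L * (Lᵀ * Φᵀ * Φ) + 1).det := by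
            simp [Matrix.mul_assoc]
        _ = ((Lᵀ * Φᵀ * Φ) * L + 1).det := Matrix.det_mul_add_one_comm _ _
        _ = (Lᵀ * Φᵀ * Φ * L + 1).det := rfl
    rw [this, Matrix.det_mul, Matrix.det_transpose]
    exact hdetR₁.mul hdetR₁
  have hMunit : IsUnit M := (Matrix.isUnit_iff_isUnit_det _).mpr hMdet
  have hAunit : IsUnit (σ ^ 2 • M) := by
    rw [Matrix.isUnit_iff_isUnit_det, Matrix.det_smul]
    exact (IsUnit.pow _ (isUnit_iff_ne_zero.mpr hσ2)).mul hMdet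
  refine ⟨hA ▸ hAunit, ?_⟩
  rw [hA]
  -- key matrix identity: M * L = L * (R₁ᵀ * R₁)
  have hML : M * L = L * (R₁ᵀ * R₁) := by
    rw [hM, h1]
    simp [Matrix.add_mul, Matrix.mul_add, Matrix.mul_assoc, add_comm]
  have hR₁inv : R₁ * R₁⁻¹ = 1 := Matrix.mul_nonsing_inv _ hdetR₁
  have key : M *ᵥ (L *ᵥ (R₁⁻¹ *ᵥ R₂)) = (L * Lᵀ) *ᵥ (Φᵀ *ᵥ y) := by
    rw [Matrix.mulVec_mulVec, Matrix.mulVec_mulVec, hML, Matrix.mul_assoc,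
      Matrix.mul_assoc, hR₁inv, Matrix.mul_one, ← Matrix.mulVec_mulVec, h2,
      Matrix.mulVec_mulVec, Matrix.mulVec_mulVec, Matrix.mul_assoc]
  have hvec : (σ ^ 2 • (L * Lᵀ)) *ᵥ (Φᵀ *ᵥ y)
      = (σ ^ 2 • M) *ᵥ (L *ᵥ (R₁⁻¹ *ᵥ R₂)) := by
    rw [Matrix.smul_mulVec, Matrix.smul_mulVec, key]
  rw [hvec, Matrix.mulVec_mulVec, Matrix.nonsing_inv_mul _
      ((Matrix.isUnit_iff_isUnit_det _).mp hAunit), Matrix.one_mulVec]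
end

section
/- Let g : ℝ → ℝ be integrable with g(t) = 0 for all t < 0, and let u : ℝ → ℂ be continuous and integrable with Fourier transform U(ω) = ∫_ℝ u(t) e^{-iωt} dt integrable and vanishing for all |ω| ≥ ω_B, where ω_B > 0. Let 0 < h < π/ω_B, define x(t) = ∫_0^∞ g(τ) u(t−τ) dτ, and assume ∑_{k∈ℤ} |u(kh)| < ∞ and ∑_{k∈ℤ} |x(kh)| < ∞. Then for every real ω with |ω| < π/h, h·∑_{k∈ℤ} x(kh) e^{-iωkh} = G(ω)·( h·∑_{k∈ℤ} u(kh) e^{-iωkh} ), where G(ω) = ∫_0^∞ g(t) e^{-iωt} dt. -/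
/-!
A spectrum supported in `[-π/h, π/h]` periodises to a continuous function on the circle of
length `2π/h`. By Fourier inversion its Fourier coefficients are the scaled samples `h f(-nh)`,
so when the samples are summable its Fourier series converges pointwise, and the DTFT of the
samples coincides with the continuous Fourier transform on the band. The output `x = g ⋆ u` is
band-limited together with `u`, because `X = G U` by the convolution theorem; applying this to
`u` and `x` turns the claim into `X = G U` itself.
-/

open MeasureTheory Real

noncomputable def fourierTransform (f : ℝ → ℂ) (ω : ℝ) : ℂ :=
  ∫ t : ℝ, f t * Complex.exp (-(Complex.I * (ω : ℂ) * (t : ℂ)))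

open scoped FourierTransform Convolution

theorem setIntegral_Ioi_zero_eq_integral {E : Type*} [NormedAddCommGroup E] [NormedSpace ℝ E]
    {f : ℝ → E} (hf : ∀ t < 0, f t = 0) : ∫ t in Set.Ioi 0, f t = ∫ t, f t := by
  rw [← integral_Ici_eq_integral_Ioi, setIntegral_eq_integral_of_forall_compl_eq_zero
    fun t (ht : t ∉ Set.Ici 0) => hf t (not_le.1 ht)]

theorem Continuous.bddAbove_range_norm_of_integrable_fourier {V E : Type*}
    [NormedAddCommGroup V] [InnerProductSpace ℝ V] [FiniteDimensional ℝ V]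
    [MeasurableSpace V] [BorelSpace V]
    [NormedAddCommGroup E] [NormedSpace ℂ E] [CompleteSpace E]
    {f : V → E} (hc : Continuous f) (hf : Integrable f) (hF : Integrable (𝓕 f)) :
    BddAbove (Set.range fun v => ‖f v‖) := by
  refine ⟨∫ ξ, ‖𝓕 f ξ‖, ?_⟩
  rintro _ ⟨v, rfl⟩
  calc ‖f v‖ = ‖𝓕⁻ (𝓕 f) v‖ := by rw [hc.fourierInv_fourier_eq hf hF]
    _ ≤ ∫ ξ, ‖𝓕 f ξ‖ := VectorFourier.norm_fourierIntegral_le_integral_norm _ _ _ _ _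

theorem fourier_eq_fourierTransform (f : ℝ → ℂ) (ξ : ℝ) :
    𝓕 f ξ = fourierTransform f (2 * π * ξ) := by
  rw [Real.fourier_real_eq_integral_exp_smul, fourierTransform]
  congr 1 with t
  rw [smul_eq_mul, mul_comm]
  push_cast
  ring_nf

theorem fourierTransform_eq_fourier (f : ℝ → ℂ) (ω : ℝ) :
    fourierTransform f ω = 𝓕 f (ω / (2 * π)) := by
  rw [fourier_eq_fourierTransform, mul_div_cancel₀ _ two_pi_pos.ne']

theorem norm_fourierTransform_le_integral_norm (f : ℝ → ℂ) (ω : ℝ) :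
    ‖fourierTransform f ω‖ ≤ ∫ t, ‖f t‖ := by
  rw [fourierTransform_eq_fourier]
  exact VectorFourier.norm_fourierIntegral_le_integral_norm _ _ _ _ _

theorem continuous_fourierTransform {f : ℝ → ℂ} (hf : Integrable f) :
    Continuous (fourierTransform f) := by
  simp_rw [funext (fourierTransform_eq_fourier f)]
  exact (VectorFourier.fourierIntegral_continuous continuous_fourierChar continuous_inner hf).comp
    (continuous_id.div_const _)

theorem integrable_fourier_of_integrable_fourierTransform {f : ℝ → ℂ}
    (hF : Integrable (fourierTransform f)) : Integrable (𝓕 f) := by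
  simp_rw [funext (fourier_eq_fourierTransform f)]
  exact hF.comp_mul_left' two_pi_pos.ne'

theorem fourierTransform_convolution {f u : ℝ → ℂ} (hf : Integrable f) (hu : Integrable u)
    (ω : ℝ) : fourierTransform (f ⋆[ContinuousLinearMap.mul ℂ ℂ] u) ω
      = fourierTransform f ω * fourierTransform u ω := by
  simp only [fourierTransform_eq_fourier]
  exact Real.fourier_mul_convolution_eq hf hu _

theorem integral_fourierTransform_mul_exp {f : ℝ → ℂ} (hc : Continuous f) (hf : Integrable f)
    (hF : Integrable (fourierTransform f)) (t : ℝ) :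
    ∫ ω, fourierTransform f ω * Complex.exp (Complex.I * ω * t) = 2 * π * f t := by
  have hinv := congrFun (hc.fourierInv_fourier_eq hf
    (integrable_fourier_of_integrable_fourierTransform hF)) t
  rw [Real.fourierInv_eq_fourier_neg, Real.fourier_real_eq_integral_exp_smul] at hinv
  set φ : ℝ → ℂ := fun ω => fourierTransform f ω * Complex.exp (Complex.I * ω * t) with hφ
  have hsub (ξ : ℝ) :
      Complex.exp (↑(-2 * π * ξ * -t) * Complex.I) • 𝓕 f ξ = φ (2 * π * ξ) := by
    rw [smul_eq_mul, mul_comm, fourier_eq_fourierTransform, hφ]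
    push_cast
    ring_nf
  rw [funext hsub, Measure.integral_comp_mul_left φ, abs_of_pos (inv_pos.2 two_pi_pos)] at hinv
  rw [← hinv, Complex.real_smul, ← mul_assoc]
  push_cast
  rw [mul_inv_cancel₀ (by exact_mod_cast two_pi_pos.ne'), one_mul]

theorem fourier_coe_apply_two_pi_div (h : ℝ) (n : ℤ) (x : ℝ) :
    (fourier n (x : AddCircle (2 * π / h)) : ℂ)
      = Complex.exp (Complex.I * x * ((n * h : ℝ) : ℂ)) := by
  rw [fourier_coe_apply]
  congr 1
  push_cast
  field_simp

theorem fourierCoeffOn_fourierTransform {w : ℝ → ℂ} (hc : Continuous w) (hi : Integrable w)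
    (hW : Integrable (fourierTransform w)) {h : ℝ} (hh : 0 < h) {a : ℝ}
    (hsupp : ∀ ω ∉ Set.Ioc a (a + 2 * π / h), fourierTransform w ω = 0) (n : ℤ) :
    fourierCoeffOn (lt_add_of_pos_right a (div_pos two_pi_pos hh)) (fourierTransform w) n
      = h * w (-n * h) := by
  have hterm (x : ℝ) :
      (fourier (-n) (x : AddCircle (a + 2 * π / h - a)) : ℂ) • fourierTransform w x
        = fourierTransform w x * Complex.exp (Complex.I * x * ((-n * h : ℝ) : ℂ)) := by
    rw [add_sub_cancel_left, fourier_coe_apply_two_pi_div, smul_eq_mul, mul_comm]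
    push_cast
    ring_nf
  rw [fourierCoeffOn_eq_integral]
  simp_rw [hterm]
  rw [intervalIntegral.integral_of_le (lt_add_of_pos_right a (div_pos two_pi_pos hh)).le,
    setIntegral_eq_integral_of_forall_compl_eq_zero fun x hx => by rw [hsupp x hx, zero_mul],
    integral_fourierTransform_mul_exp hc hi hW, add_sub_cancel_left, Complex.real_smul]
  push_cast
  field_simp

noncomputable def dtft (h : ℝ) (f : ℝ → ℂ) (ω : ℝ) : ℂ :=
  h * ∑' k : ℤ, f (k * h) * Complex.exp (-(Complex.I * ω * ((k * h : ℝ) : ℂ)))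

theorem hasSum_dtft_of_bandlimited {w : ℝ → ℂ} (hc : Continuous w) (hi : Integrable w)
    (hW : Integrable (fourierTransform w)) {h : ℝ} (hh : 0 < h)
    (hband : ∀ ω, π / h ≤ |ω| → fourierTransform w ω = 0)
    (hsum : Summable fun k : ℤ => ‖w (k * h)‖) {ω : ℝ} (hω : |ω| < π / h) :
    HasSum
      (fun k : ℤ => h * (w (k * h) * Complex.exp (-(Complex.I * ω * ((k * h : ℝ) : ℂ)))))
      (fourierTransform w ω) := by
  have : Fact (0 < 2 * π / h) := ⟨div_pos two_pi_pos hh⟩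
  have hwindow : -(π / h) + 2 * π / h = π / h := by ring
  have hπh : 0 < π / h := div_pos pi_pos hh
  have hsupp :
      ∀ ξ ∉ Set.Ioc (-(π / h)) (-(π / h) + 2 * π / h), fourierTransform w ξ = 0 := by
    intro ξ hξ
    rw [hwindow, Set.mem_Ioc, not_and_or, not_lt, not_le] at hξ
    refine hband ξ (le_abs.2 ?_)
    rcases hξ with hξ | hξ
    · exact Or.inr (by linarith)
    · exact Or.inl hξ.le
  let F : C(AddCircle (2 * π / h), ℂ) :=
    ⟨AddCircle.liftIco (2 * π / h) (-(π / h)) (fourierTransform w),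
      AddCircle.liftIco_continuous
        (by rw [hwindow, hband _ (by rw [abs_neg, abs_of_pos hπh]),
          hband _ (abs_of_pos hπh).ge])
        (continuous_fourierTransform hi).continuousOn⟩
  have hcoeff (n : ℤ) : fourierCoeff F n = h * w (-n * h) :=
    (fourierCoeff_liftIco_eq _ n).trans (fourierCoeffOn_fourierTransform hc hi hW hh hsupp n)
  have hcoeff_summable : Summable (fourierCoeff F) := by
    rw [funext hcoeff]
    refine ((hsum.of_norm.comp_injective neg_injective).mul_left (h : ℂ)).congr fun n => ?_
    simp
  have hFω : F ω = fourierTransform w ω := by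
    refine AddCircle.liftIco_coe_apply (f := fourierTransform w) ?_
    rw [Set.mem_Ico, hwindow]
    exact ⟨by linarith [neg_abs_le ω], (abs_lt.1 hω).2⟩
  have hseries := (Equiv.neg ℤ).hasSum_iff.2
    (has_pointwise_sum_fourier_series_of_summable hcoeff_summable (ω : AddCircle (2 * π / h)))
  rw [hFω] at hseries
  convert hseries using 2 with k
  rw [Function.comp_apply, Equiv.neg_apply, hcoeff, fourier_coe_apply_two_pi_div, smul_eq_mul]
  push_cast
  ring_nf

theorem dtft_eq_fourierTransform_of_bandlimited {w : ℝ → ℂ} (hc : Continuous w)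
    (hi : Integrable w) (hW : Integrable (fourierTransform w)) {h : ℝ} (hh : 0 < h)
    (hband : ∀ ω, π / h ≤ |ω| → fourierTransform w ω = 0)
    (hsum : Summable fun k : ℤ => ‖w (k * h)‖) {ω : ℝ} (hω : |ω| < π / h) :
    dtft h w ω = fourierTransform w ω := by
  rw [dtft, ← tsum_mul_left]
  exact (hasSum_dtft_of_bandlimited hc hi hW hh hband hsum hω).tsum_eq

theorem integrable_fourierTransform_convolution {f u : ℝ → ℂ} (hf : Integrable f)
    (hu : Integrable u) (hU : Integrable (fourierTransform u)) :
    Integrable (fourierTransform (f ⋆[ContinuousLinearMap.mul ℂ ℂ] u)) := by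
  refine (hU.norm.const_mul (∫ t, ‖f t‖)).mono'
    (continuous_fourierTransform (hf.integrable_convolution _ hu)).aestronglyMeasurable
    (.of_forall fun ω => ?_)
  rw [fourierTransform_convolution hf hu, norm_mul]
  exact mul_le_mul_of_nonneg_right (norm_fourierTransform_le_integral_norm f ω) (norm_nonneg _)

theorem dtft_convolution_eq_mul {f u : ℝ → ℂ} (hf : Integrable f) (hu_cont : Continuous u)
    (hu_int : Integrable u) (hU : Integrable (fourierTransform u)) {h : ℝ} (hh : 0 < h)
    (hband : ∀ ω, π / h ≤ |ω| → fourierTransform u ω = 0)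
    (hsumu : Summable fun k : ℤ => ‖u (k * h)‖)
    (hsumx : Summable fun k : ℤ => ‖(f ⋆[ContinuousLinearMap.mul ℂ ℂ] u) (k * h)‖)
    {ω : ℝ} (hω : |ω| < π / h) :
    dtft h (f ⋆[ContinuousLinearMap.mul ℂ ℂ] u) ω = fourierTransform f ω * dtft h u ω := by
  have hFT := fourierTransform_convolution hf hu_int
  have hu_bdd := hu_cont.bddAbove_range_norm_of_integrable_fourier hu_int
    (integrable_fourier_of_integrable_fourierTransform hU)
  have hx_cont : Continuous (f ⋆[ContinuousLinearMap.mul ℂ ℂ] u) :=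
    hu_bdd.continuous_convolution_right_of_integrable _ hf hu_cont
  have hx_band (ξ : ℝ) (hξ : π / h ≤ |ξ|) :
      fourierTransform (f ⋆[ContinuousLinearMap.mul ℂ ℂ] u) ξ = 0 := by
    rw [hFT, hband ξ hξ, mul_zero]
  rw [dtft_eq_fourierTransform_of_bandlimited hu_cont hu_int hU hh hband hsumu hω,
    dtft_eq_fourierTransform_of_bandlimited hx_cont (hf.integrable_convolution _ hu_int)
      (integrable_fourierTransform_convolution hf hu_int hU) hh hx_band hsumx hω, hFT]

theorem dtft_output_eq_G_mul_dtft_input_general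
    (g : ℝ → ℝ) (u : ℝ → ℂ) (ωB h : ℝ)
    (hg_int : Integrable g) (hg_causal : ∀ t : ℝ, t < 0 → g t = 0)
    (hu_cont : Continuous u) (hu_int : Integrable u)
    (hU_int : Integrable (fourierTransform u))
    (hband : ∀ ω : ℝ, ωB ≤ |ω| → fourierTransform u ω = 0)
    (hh : 0 < h) (hhB : h < π / ωB)
    (x : ℝ → ℂ) (hx : ∀ t : ℝ, x t = ∫ τ in Set.Ioi (0 : ℝ), (g τ : ℂ) * u (t - τ))
    (hsumu : Summable fun k : ℤ => ‖u ((k : ℝ) * h)‖)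
    (hsumx : Summable fun k : ℤ => ‖x ((k : ℝ) * h)‖) :
    ∀ ω : ℝ, |ω| < π / h →
      (h : ℂ) * ∑' k : ℤ,
          x ((k : ℝ) * h) * Complex.exp (-(Complex.I * (ω : ℂ) * (((k : ℝ) * h : ℝ) : ℂ)))
        = (∫ t in Set.Ioi (0 : ℝ), (g t : ℂ) * Complex.exp (-(Complex.I * (ω : ℂ) * (t : ℂ))))
          * ((h : ℂ) * ∑' k : ℤ,
              u ((k : ℝ) * h) * Complex.exp (-(Complex.I * (ω : ℂ) * (((k : ℝ) * h : ℝ) : ℂ)))) := by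
  intro ω hω
  have hωB : 0 < ωB := (div_pos_iff_of_pos_left pi_pos).1 (hh.trans hhB)
  have hωBh : ωB < π / h := by rwa [lt_div_iff₀ hωB, mul_comm, ← lt_div_iff₀ hh] at hhB
  have hcausal (F : ℝ → ℂ) (t : ℝ) (ht : t < 0) : (g t : ℂ) * F t = 0 := by
    rw [hg_causal t ht, Complex.ofReal_zero, zero_mul]
  have hx_conv : x = (fun t => (g t : ℂ)) ⋆[ContinuousLinearMap.mul ℂ ℂ] u := by
    ext t
    rw [hx, convolution_mul, setIntegral_Ioi_zero_eq_integral (hcausal _)]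
  subst hx_conv
  rw [setIntegral_Ioi_zero_eq_integral (hcausal _)]
  exact dtft_convolution_eq_mul hg_int.ofReal hu_cont hu_int hU_int hh
    (fun ξ hξ => hband ξ (hωBh.le.trans hξ)) hsumu hsumx hω

/-- The frequency-response identity of Proposition 1 in product form: on `|ω| < π/h`,
the DTFT of the sampled output equals the continuous-time frequency response `G(ω)`
times the DTFT of the sampled input. -/
theorem dtft_output_eq_G_mul_dtft_input
    (g : ℝ → ℝ) (u : ℝ → ℂ) (ωB h : ℝ)
    (hg_int : Integrable g) (hg_causal : ∀ t : ℝ, t < 0 → g t = 0)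
    (hu_cont : Continuous u) (hu_int : Integrable u)
    (hU_int : Integrable (fourierTransform u))
    (hband : ∀ ω : ℝ, ωB ≤ |ω| → fourierTransform u ω = 0)
    (hωB : 0 < ωB) (hh : 0 < h) (hhB : h < π / ωB)
    (x : ℝ → ℂ) (hx : ∀ t : ℝ, x t = ∫ τ in Set.Ioi (0 : ℝ), (g τ : ℂ) * u (t - τ))
    (hsumu : Summable fun k : ℤ => ‖u ((k : ℝ) * h)‖)
    (hsumx : Summable fun k : ℤ => ‖x ((k : ℝ) * h)‖) :
    ∀ ω : ℝ, |ω| < π / h →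
      (h : ℂ) * ∑' k : ℤ,
          x ((k : ℝ) * h) * Complex.exp (-(Complex.I * (ω : ℂ) * (((k : ℝ) * h : ℝ) : ℂ)))
        = (∫ t in Set.Ioi (0 : ℝ), (g t : ℂ) * Complex.exp (-(Complex.I * (ω : ℂ) * (t : ℂ))))
          * ((h : ℂ) * ∑' k : ℤ,
              u ((k : ℝ) * h) * Complex.exp (-(Complex.I * (ω : ℂ) * (((k : ℝ) * h : ℝ) : ℂ)))) :=
  dtft_output_eq_G_mul_dtft_input_general g u ωB h hg_int hg_causal hu_cont hu_int hU_int hband hh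
    hhB x hx hsumu hsumx
end
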